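/- There exists an infinite word w over Σ₂ = {0,1} that is not periodic (i.e., w ≠ y^ω for every nonempty finite word y) such that if x is a subword of w with |x| ≥ 6, then x^R is not a subword of w. -/

import Mathlib

/-- `x` occurs as a contiguous block of consecutive letters of the infinite word `w`. -/
def IsFactor {α : Type*} (x : List α) (w : ℕ → α) : Prop :=
  ∃ i : ℕ, x = (List.range x.length).map fun j => w (i + j)

/-- The periodic infinite word `y^ω = yyy⋯`. -/
def powOmega {α : Type*} (y : List α) (h : y ≠ []) : ℕ → α :=
  fun n => y[n % y.length]'(Nat.mod_lt n (List.length_pos_iff.mpr h))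

/-- The word `0 · (001011)^ω`. -/
def w0 : ℕ → Fin 2
  | 0 => 0
  | n + 1 =>
    match n % 6 with
    | 0 => 0
    | 1 => 0
    | 2 => 1
    | 3 => 0
    | 4 => 1
    | _ => 1

lemma w0_red (n : ℕ) (h : 1 ≤ n) : w0 n = w0 (1 + (n - 1) % 6) := by
  cases n with
  | zero => omega
  | succ m =>
    have h1 : 1 + (m + 1 - 1) % 6 = (m % 6) + 1 := by omega
    rw [h1]
    show (match m % 6 with
          | 0 => (0 : Fin 2) | 1 => 0 | 2 => 1 | 3 => 0 | 4 => 1 | _ => 1) =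
         (match (m % 6) % 6 with
          | 0 => (0 : Fin 2) | 1 => 0 | 2 => 1 | 3 => 0 | 4 => 1 | _ => 1)
    rw [Nat.mod_mod_of_dvd _ dvd_rfl]

/-- Every length-6 window of `w0` equals a window starting at some `r < 7`. -/
lemma rep (m : ℕ) : ∃ r, r < 7 ∧ (1 ≤ m → 1 ≤ r) ∧
    ∀ k, k < 6 → w0 (m + k) = w0 (r + k) := by
  rcases Nat.eq_zero_or_pos m with rfl | hm
  · exact ⟨0, by norm_num, by omega, fun k _ => rfl⟩
  · refine ⟨1 + (m - 1) % 6, by omega, fun _ => by omega, fun k _ => ?_⟩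
    rw [w0_red (m + k) (by omega), w0_red (1 + (m - 1) % 6 + k) (by omega)]
    congr 2
    omega

lemma dec1 : ∀ r < 7, 1 ≤ r → ¬ (∀ k < 6, w0 (r + k) = w0 k) := by decide

lemma dec2 : ∀ r < 7, ∀ s < 7, ¬ (∀ k < 6, w0 (s + k) = w0 (r + (5 - k))) := by decide

/-- There is a nonperiodic infinite binary word such that if `x` is a subword
with `|x| ≥ 6` then `x^R` is not a subword. -/
theorem stmt_14 :
    ∃ w : ℕ → Fin 2,
      (¬ ∃ (y : List (Fin 2)) (hy : y ≠ []), w = powOmega y hy) ∧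
      (∀ x : List (Fin 2), IsFactor x w → 6 ≤ x.length → ¬ IsFactor x.reverse w) := by
  refine ⟨w0, ?_, ?_⟩
  · rintro ⟨y, hy, hE⟩
    set p := y.length with hp
    have hp1 : 1 ≤ p := List.length_pos_iff.mpr hy
    have hper : ∀ k, w0 (p + k) = w0 k := by
      intro k
      rw [hE]
      unfold powOmega
      simp only [hp, Nat.add_mod_left]
    obtain ⟨r, hr7, hr1, hrep⟩ := rep p
    exact dec1 r hr7 (hr1 hp1) (fun k hk => (hrep k hk).symm.trans (hper k))
  · intro x hx h6 hxr
    obtain ⟨i, hxi⟩ := hx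
    obtain ⟨j, hxj⟩ := hxr
    set n := x.length with hn
    have hget : ∀ k (hk : k < n), x[k] = w0 (i + k) := by
      intro k hk
      rw [List.getElem_of_eq hxi, List.getElem_map, List.getElem_range]
    have hgetr : ∀ k (hk : k < n), x[n - 1 - k]'(by omega) = w0 (j + k) := by
      intro k hk
      have hk' : k < x.reverse.length := by simpa using hk
      have h1 : x.reverse[k] = w0 (j + k) := by
        rw [List.getElem_of_eq hxj, List.getElem_map, List.getElem_range]
      rw [← h1, List.getElem_reverse]
    have key : ∀ k, k < 6 → w0 (j + k) = w0 (i + n - 6 + (5 - k)) := by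
      intro k hk
      have h1 : n - 1 - k < n := by omega
      have h2 : i + (n - 1 - k) = i + n - 6 + (5 - k) := by omega
      rw [← hgetr k (by omega), hget (n - 1 - k) h1, h2]
    obtain ⟨s, hs7, _, hsrep⟩ := rep j
    obtain ⟨r, hr7, _, hrrep⟩ := rep (i + n - 6)
    refine dec2 r hr7 s hs7 (fun k hk => ?_)
    rw [← hsrep k hk, key k hk, hrrep (5 - k) (by omega)]
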